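/- Let A be an n×n positive definite real symmetric matrix and let B be an n×n positive semidefinite real symmetric matrix with B ≠ 0. Then for s ≥ 0, the function D(s) = tr((s·B + A)⁻¹) is strictly decreasing in s. In particular, if s' > s ≥ 0 then tr((s'·B + A)⁻¹) < tr((s·B + A)⁻¹). -/

import Mathlib

/-!
Write `N = M + Δ` with `M = s • B + A` positive definite and `Δ = (s' - s) • B` positive
semidefinite and nonzero. Then `M⁻¹ - N⁻¹ = N⁻¹ (Δ + Δ M⁻¹ Δ) N⁻¹` is a congruence of a
positive semidefinite matrix, hence positive semidefinite; it is nonzero because `Δ ≠ 0`, so its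
trace is positive.
-/

open scoped ComplexOrder

namespace Matrix

variable {n 𝕜 : Type*} [Fintype n]

lemma PosSemidef.trace_pos_of_ne_zero [RCLike 𝕜] {A : Matrix n n 𝕜} (hA : A.PosSemidef)
    (h : A ≠ 0) : 0 < A.trace :=
  hA.trace_nonneg.lt_of_ne fun h0 ↦ h (hA.trace_eq_zero_iff.mp h0.symm)

variable [DecidableEq n]

lemma inv_sub_inv_add_eq [CommRing 𝕜] {M Δ : Matrix n n 𝕜} (hM : IsUnit M.det)
    (hMΔ : IsUnit (M + Δ).det) :
    M⁻¹ - (M + Δ)⁻¹ = (M + Δ)⁻¹ * (Δ + Δ * M⁻¹ * Δ) * (M + Δ)⁻¹ :=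
  calc M⁻¹ - (M + Δ)⁻¹ = (M + Δ)⁻¹ * Δ * M⁻¹ := by
        rw [mul_assoc, show Δ * M⁻¹ = (M + Δ) * M⁻¹ - 1 by rw [add_mul, mul_nonsing_inv M hM]; abel,
          mul_sub, ← mul_assoc, nonsing_inv_mul _ hMΔ, one_mul, mul_one]
    _ = (M + Δ)⁻¹ * (Δ * M⁻¹ * (M + Δ)) * (M + Δ)⁻¹ := by
        rw [mul_assoc _ _ (M + Δ)⁻¹, mul_assoc _ (M + Δ), mul_nonsing_inv _ hMΔ, mul_one,
          mul_assoc]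
    _ = (M + Δ)⁻¹ * (Δ + Δ * M⁻¹ * Δ) * (M + Δ)⁻¹ := by
        rw [mul_add, mul_assoc Δ, nonsing_inv_mul M hM, mul_one]

variable [RCLike 𝕜] {M Δ : Matrix n n 𝕜}

lemma PosDef.isUnit_det (hM : M.PosDef) : IsUnit M.det :=
  (isUnit_iff_isUnit_det M).mp hM.isUnit

lemma PosDef.posSemidef_inv_sub_inv_add (hM : M.PosDef) (hΔ : Δ.PosSemidef) :
    (M⁻¹ - (M + Δ)⁻¹).PosSemidef := by
  have hMΔ : (M + Δ).PosDef := hM.add_posSemidef hΔ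
  rw [inv_sub_inv_add_eq hM.isUnit_det hMΔ.isUnit_det]
  have hΔMΔ : (Δ * M⁻¹ * Δ).PosSemidef := by
    simpa only [hΔ.isHermitian.eq] using hM.inv.posSemidef.conjTranspose_mul_mul_same Δ
  simpa only [hMΔ.inv.isHermitian.eq] using
    (hΔ.add hΔMΔ).conjTranspose_mul_mul_same (M + Δ)⁻¹

lemma PosDef.trace_inv_add_lt (hM : M.PosDef) (hΔ : Δ.PosSemidef) (hΔ0 : Δ ≠ 0) :
    (M + Δ)⁻¹.trace < M⁻¹.trace := by
  have hne : M⁻¹ - (M + Δ)⁻¹ ≠ 0 := fun h ↦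
    hΔ0 (left_eq_add.mp (inv_inj (sub_eq_zero.mp h) hM.isUnit_det))
  simpa only [trace_sub, sub_pos] using (hM.posSemidef_inv_sub_inv_add hΔ).trace_pos_of_ne_zero hne

end Matrix

theorem stmt8 {n : ℕ} (A B : Matrix (Fin n) (Fin n) ℝ)
    (hA : A.PosDef) (hB : B.PosSemidef) (hB0 : B ≠ 0)
    {s s' : ℝ} (hs : 0 ≤ s) (hss' : s < s') :
    ((s' • B + A)⁻¹).trace < ((s • B + A)⁻¹).trace := by
  have hsplit : s' • B + A = (s • B + A) + (s' - s) • B := by rw [sub_smul]; abel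
  rw [hsplit]
  exact (hA.posSemidef_add (hB.smul hs)).trace_inv_add_lt (hB.smul (sub_pos.mpr hss').le)
    (smul_ne_zero (sub_pos.mpr hss').ne' hB0)
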